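/- arXiv:1605.02854 — 6 statements merged into one kernel-verified Lean document; each statement's English description precedes it below -/
import Mathlib

section
/- Let p : Y → X be a regular covering map between length spaces which is a local isometry, with deck group G acting by isometries of Y. Fix ỹ ∈ Y, suppose that L := min{ d_Y(ỹ, h·ỹ) : h ∈ G, h ≠ 1 } exists, is positive, and is attained by some g ∈ G, and let γ̃ : [0,L] → Y be a unit-speed minimizing geodesic from ỹ to g·ỹ (so d_Y(γ̃(s),γ̃(t)) = |s−t|). Then the projected loop γ := p ∘ γ̃ is halfway minimizing: d_X(γ(0), γ(L/2)) = L/2. -/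
open Set Metric

/-- The length of a curve `γ : ℝ → X`, over the interval `[0,1]`, as its total variation. -/
noncomputable def pathLength {X : Type*} [MetricSpace X] (γ : ℝ → X) : ENNReal :=
  eVariationOn γ (Set.Icc 0 1)

/-- A metric space is a length space if the distance between any two points equals the
infimum of the lengths of continuous paths joining them. -/
def IsLengthSpace (X : Type*) [MetricSpace X] : Prop :=
  ∀ x y : X,
    edist x y =
      ⨅ γ : {γ : ℝ → X // ContinuousOn γ (Set.Icc 0 1) ∧ γ 0 = x ∧ γ 1 = y},
        pathLength γ.1

/-- A map between metric spaces is a local isometry if every point has a neighborhood on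
which the map preserves distances (an isometry onto its image). -/
def IsLocalIsometry {Y X : Type*} [MetricSpace Y] [MetricSpace X] (f : Y → X) : Prop :=
  ∀ y : Y, ∃ ε > 0, ∀ a ∈ ball y ε, ∀ b ∈ ball y ε, dist (f a) (f b) = dist a b

/-
The upper bound holds because a local isometry out of a length space is `1`-Lipschitz. For the
lower bound, a path in `X` from `γ(L/2)` to `γ(0)` shorter than `L/2` would lift to a path of the
same length starting at `γ̃(L/2)` and ending over `p(ỹ)`, i.e. at some `h • ỹ`. Then
`d(ỹ, h • ỹ) < L/2 + L/2 = L`, so `h = 1` by minimality, contradicting `d(ỹ, γ̃(L/2)) = L/2`.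
-/

theorem eVariationOn_eq_of_edist_eq {α E F : Type*} [LinearOrder α] [PseudoEMetricSpace E]
    [PseudoEMetricSpace F] {f : α → E} {g : α → F} {s : Set α}
    (h : ∀ u ∈ s, ∀ v ∈ s, edist (f u) (f v) = edist (g u) (g v)) :
    eVariationOn f s = eVariationOn g s :=
  iSup_congr fun p => Finset.sum_congr rfl fun _ _ => h _ (p.2.2.2 _) _ (p.2.2.2 _)

section

variable {Y X : Type*} [MetricSpace Y] [MetricSpace X] {p : Y → X}

theorem IsLocalIsometry.eVariationOn_comp (hp : IsLocalIsometry p) {γ : ℝ → Y} {a b : ℝ}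
    (hab : a ≤ b) (hγ : ContinuousOn γ (Icc a b)) :
    eVariationOn (p ∘ γ) (Icc a b) = eVariationOn γ (Icc a b) := by
  choose ε hε hisom using hp
  obtain ⟨t, ht0, htmono, ⟨m, hm⟩, hpiece⟩ := exists_monotone_Icc_subset_open_cover_Icc hab
    (c := fun y => (Icc a b).domRestrict γ ⁻¹' ball y (ε y))
    (fun y => isOpen_ball.preimage hγ.domRestrict)
    (fun s _ => mem_iUnion.2 ⟨γ s, mem_ball_self (hε _)⟩)
  have hT : Monotone fun n => (t n : ℝ) := fun i j hij => htmono hij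
  have hab' : Icc a b = Icc (t 0 : ℝ) (t m) := by rw [ht0, hm m le_rfl]
  rw [hab', ← eVariationOn.sum' _ hT, ← eVariationOn.sum' _ hT]
  refine Finset.sum_congr rfl fun n _ => eVariationOn_eq_of_edist_eq fun u hu v hv => ?_
  obtain ⟨y, hy⟩ := hpiece n
  have hmem : ∀ w ∈ Icc (t n : ℝ) (t (n + 1)), γ w ∈ ball y (ε y) := fun w hw =>
    hy (a := ⟨w, (t n).2.1.trans hw.1, hw.2.trans (t (n + 1)).2.2⟩) hw
  simp only [Function.comp_apply, edist_dist, hisom y _ (hmem u hu) _ (hmem v hv)]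

theorem IsLocalIsometry.lipschitzWith_one (hY : IsLengthSpace Y) (hp : IsLocalIsometry p) :
    LipschitzWith 1 p := by
  refine LipschitzWith.of_edist_le fun a b => ?_
  rw [hY a b]
  refine le_iInf fun ⟨c, hc, hc0, hc1⟩ => ?_
  calc edist (p a) (p b) = edist ((p ∘ c) 0) ((p ∘ c) 1) := by simp [hc0, hc1]
    _ ≤ eVariationOn (p ∘ c) (Icc 0 1) :=
      eVariationOn.edist_le _ (left_mem_Icc.2 zero_le_one) (right_mem_Icc.2 zero_le_one)
    _ = pathLength c := hp.eVariationOn_comp zero_le_one hc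

theorem IsCoveringMap.exists_lift_edist_le_eVariationOn (hp : IsCoveringMap p)
    (hloc : IsLocalIsometry p) {σ : ℝ → X} (hσ : ContinuousOn σ (Icc 0 1)) {y₀ : Y}
    (hy₀ : p y₀ = σ 0) : ∃ y₁, p y₁ = σ 1 ∧ edist y₀ y₁ ≤ eVariationOn σ (Icc 0 1) := by
  obtain ⟨Γ, hΓp, hΓ0⟩ :=
    hp.exists_path_lifts ⟨(Icc 0 1).domRestrict σ, hσ.domRestrict⟩ y₀ hy₀.symm
  set Γ' := IccExtend zero_le_one Γ
  have hΓ'σ : EqOn (p ∘ Γ') σ (Icc 0 1) := fun s hs => by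
    simpa [Γ', IccExtend_of_mem _ _ hs] using congrFun hΓp ⟨s, hs⟩
  refine ⟨Γ 1, congrFun hΓp 1, ?_⟩
  calc edist y₀ (Γ 1) = edist (Γ' 0) (Γ' 1) := by simp [Γ', hΓ0]
    _ ≤ eVariationOn Γ' (Icc 0 1) :=
      eVariationOn.edist_le _ (left_mem_Icc.2 zero_le_one) (right_mem_Icc.2 zero_le_one)
    _ = eVariationOn (p ∘ Γ') (Icc 0 1) :=
      (hloc.eVariationOn_comp zero_le_one Γ.continuous.Icc_extend'.continuousOn).symm
    _ = eVariationOn σ (Icc 0 1) := eVariationOn.eq_of_eqOn hΓ'σ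

theorem IsCoveringMap.ball_subset_image_ball (hX : IsLengthSpace X) (hp : IsCoveringMap p)
    (hloc : IsLocalIsometry p) (y : Y) (r : ℝ) : ball (p y) r ⊆ p '' ball y r := by
  intro x hx
  have hr : edist (p y) x < ENNReal.ofReal r := edist_lt_ofReal.2 (mem_ball'.1 hx)
  rw [hX, iInf_lt_iff] at hr
  obtain ⟨⟨σ, hσ, hσ0, hσ1⟩, hσr⟩ := hr
  obtain ⟨y₁, hy₁, hyy₁⟩ := hp.exists_lift_edist_le_eVariationOn hloc hσ hσ0.symm
  exact ⟨y₁, mem_ball'.2 (edist_lt_ofReal.1 (hyy₁.trans_lt hσr)), hy₁.trans hσ1⟩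

end

theorem stmt_1_general {Y X : Type*} [MetricSpace Y] [MetricSpace X]
    (hY : IsLengthSpace Y) (hX : IsLengthSpace X)
    (p : Y → X) (hp : IsCoveringMap p) (hloc : IsLocalIsometry p)
    (G : Type*) [Group G] [MulAction G Y]
    (hreg : ∀ y₁ y₂ : Y, p y₁ = p y₂ → ∃ g : G, g • y₁ = y₂)
    (ytil : Y) (L : ℝ) (hLpos : 0 < L)
    (hmin : IsLeast {d : ℝ | ∃ h : G, h ≠ 1 ∧ d = dist ytil (h • ytil)} L)
    (g : G)
    (gam : ℝ → Y)
    (hgeo : ∀ s ∈ Set.Icc (0:ℝ) L, ∀ t ∈ Set.Icc (0:ℝ) L,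
      dist (gam s) (gam t) = |s - t|)
    (h0 : gam 0 = ytil) :
    dist (p (gam 0)) (p (gam (L / 2))) = L / 2 := by
  have hmid : dist ytil (gam (L / 2)) = L / 2 := by
    rw [← h0, hgeo 0 (left_mem_Icc.2 hLpos.le) (L / 2) ⟨by linarith, by linarith⟩,
      abs_of_nonpos (by linarith)]
    ring
  refine le_antisymm ?_ (not_lt.1 fun hlt => ?_)
  · simpa [h0, hmid] using (hloc.lipschitzWith_one hY).dist_le_mul (gam 0) (gam (L / 2))
  obtain ⟨y₁, hy₁, hpy₁⟩ := hp.ball_subset_image_ball hX hloc (gam (L / 2)) (L / 2)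
    (mem_ball.2 (h0 ▸ hlt))
  obtain ⟨h, rfl⟩ := hreg ytil y₁ hpy₁.symm
  have hshort : dist ytil (h • ytil) < L := by
    linarith [dist_triangle ytil (gam (L / 2)) (h • ytil), mem_ball'.1 hy₁]
  obtain rfl : h = 1 := by
    by_contra hne
    exact (hmin.2 ⟨h, hne, rfl⟩).not_gt hshort
  rw [one_smul, mem_ball'] at hy₁
  linarith [dist_comm ytil (gam (L / 2))]

/-- The Halfway Lemma: the projection of a minimizing geodesic from `ytil` to `g • ytil`,
where `g` attains the minimal positive displacement `L` of the deck group at `ytil`,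
is a halfway-minimizing loop: `d(γ(0), γ(L/2)) = L/2`. -/
theorem stmt_1 {Y X : Type*} [MetricSpace Y] [MetricSpace X]
    (hY : IsLengthSpace Y) (hX : IsLengthSpace X)
    (p : Y → X) (hp : IsCoveringMap p) (hloc : IsLocalIsometry p)
    (G : Type*) [Group G] [MulAction G Y]
    (hiso : ∀ g : G, Isometry (fun y : Y => g • y))
    (hdeck : ∀ (g : G) (y : Y), p (g • y) = p y)
    (hreg : ∀ y₁ y₂ : Y, p y₁ = p y₂ → ∃ g : G, g • y₁ = y₂)
    (ytil : Y) (L : ℝ) (hLpos : 0 < L)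
    (hmin : IsLeast {d : ℝ | ∃ h : G, h ≠ 1 ∧ d = dist ytil (h • ytil)} L)
    (g : G) (hg : g ≠ 1) (hgL : dist ytil (g • ytil) = L)
    (gam : ℝ → Y)
    (hgeo : ∀ s ∈ Set.Icc (0:ℝ) L, ∀ t ∈ Set.Icc (0:ℝ) L,
      dist (gam s) (gam t) = |s - t|)
    (h0 : gam 0 = ytil) (hL : gam L = g • ytil) :
    dist (p (gam 0)) (p (gam (L / 2))) = L / 2 :=
  stmt_1_general hY hX p hp hloc G hreg ytil L hLpos hmin g gam hgeo h0
end

section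
/- Let (Y,d) be a metric space equipped with a Borel measure m, let G be a group acting on Y by measure-preserving surjective isometries, and let p̃ ∈ Y and δ₀ > 0 be such that the balls g·B(p̃,δ₀), for g ∈ G, are pairwise disjoint for distinct elements of G. Fix D > 0 and assume 0 < m(B(p̃,δ₀)) and m(B(p̃, D+δ₀)) < ∞. Then the number of elements g ∈ G with d(p̃, g·p̃) ≤ D is at most m(B(p̃, D+δ₀)) / m(B(p̃, δ₀)). -/
open Set Metric MeasureTheory ENNReal

/-! The translates `g • B(p̃, δ₀)` with `d(p̃, g • p̃) ≤ D` are disjoint balls `B(g • p̃, δ₀)`, all of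
measure `m(B(p̃, δ₀))` and all contained in `B(p̃, D + δ₀)`; so any finite family of such `g` has at
most `m(B(p̃, D + δ₀)) / m(B(p̃, δ₀))` members, which bounds the whole set. -/

theorem Set.finite_and_natCard_le_of_forall_finset_card_le {ι : Type*} {S : Set ι} {b : ℝ≥0∞}
    (hb : b ≠ ∞) (h : ∀ F : Finset ι, ↑F ⊆ S → (F.card : ℝ≥0∞) ≤ b) :
    S.Finite ∧ (Nat.card S : ℝ≥0∞) ≤ b := by
  have hS : S.Finite := by
    by_contra hinf
    obtain ⟨n, hn⟩ := ENNReal.exists_nat_gt hb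
    obtain ⟨F, hFS, rfl⟩ := Set.Infinite.exists_subset_card_eq hinf n
    exact (h F hFS).not_gt hn
  refine ⟨hS, ?_⟩
  simpa [Nat.card_eq_card_finite_toFinset hS] using h hS.toFinset (by simp)

theorem MeasureTheory.finite_and_natCard_le_measure_div_of_pairwiseDisjoint
    {ι α : Type*} [MeasurableSpace α] (μ : Measure α) {S : Set ι} {s : ι → Set α} {t : Set α}
    {c : ℝ≥0∞} (hc : c ≠ 0) (ht : μ t ≠ ∞) (hd : S.PairwiseDisjoint s)
    (hs : ∀ i ∈ S, MeasurableSet (s i)) (hst : ∀ i ∈ S, s i ⊆ t) (hμ : ∀ i ∈ S, c ≤ μ (s i)) :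
    S.Finite ∧ (Nat.card S : ℝ≥0∞) ≤ μ t / c := by
  refine Set.finite_and_natCard_le_of_forall_finset_card_le (ENNReal.div_lt_top ht hc).ne ?_
  intro F hF
  rw [ENNReal.le_div_iff_mul_le (Or.inl hc) (Or.inr ht)]
  calc (F.card : ℝ≥0∞) * c = ∑ _ ∈ F, c := by simp [mul_comm]
    _ ≤ ∑ i ∈ F, μ (s i) := Finset.sum_le_sum fun i hi => hμ i (hF hi)
    _ = μ (⋃ i ∈ F, s i) := (measure_biUnion_finset (hd.subset hF) fun i hi => hs i (hF hi)).symm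
    _ ≤ μ t := measure_mono (iUnion₂_subset fun i hi => hst i (hF hi))

theorem stmt_2_general {Y : Type*} [MetricSpace Y] [MeasurableSpace Y] [BorelSpace Y]
    (m : Measure Y) (G : Type*) [Group G] [MulAction G Y]
    (hiso : ∀ g : G, Isometry (fun y : Y => g • y))
    (hmp : ∀ (g : G) (A : Set Y), MeasurableSet A → m ((fun y : Y => g • y) '' A) = m A)
    (ptil : Y) (δ₀ : ℝ)
    (hdisj : Pairwise fun g h : G =>
      Disjoint ((fun y : Y => g • y) '' ball ptil δ₀) ((fun y : Y => h • y) '' ball ptil δ₀))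
    (D : ℝ)
    (hpos : 0 < m (ball ptil δ₀)) (hfin : m (ball ptil (D + δ₀)) < ⊤) :
    {g : G | dist ptil (g • ptil) ≤ D}.Finite ∧
      (Nat.card {g : G | dist ptil (g • ptil) ≤ D} : ℝ≥0∞) ≤
        m (ball ptil (D + δ₀)) / m (ball ptil δ₀) := by
  have : IsIsometricSMul G Y := ⟨hiso⟩
  have himage (g : G) : (fun y : Y => g • y) '' ball ptil δ₀ = ball (g • ptil) δ₀ := by
    rw [image_smul, Metric.smul_ball]
  refine finite_and_natCard_le_measure_div_of_pairwiseDisjoint m (s := fun g => ball (g • ptil) δ₀)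
    hpos.ne' hfin.ne ?_ (fun _ _ => measurableSet_ball) ?_ ?_
  · intro g _ h _ hgh
    simpa only [himage] using hdisj hgh
  · intro g hg
    refine ball_subset_ball' ?_
    rw [dist_comm]
    linarith [show dist ptil (g • ptil) ≤ D from hg]
  · intro g _
    rw [← himage g, hmp g _ measurableSet_ball]

/-- Packing bound: if a group `G` acts on `(Y, d, m)` by measure-preserving surjective
isometries and the translates of the ball `B(ptil, δ₀)` are pairwise disjoint, then the
number of `g ∈ G` with `d(ptil, g • ptil) ≤ D` is at most
`m(B(ptil, D + δ₀)) / m(B(ptil, δ₀))`. -/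
theorem stmt_2 {Y : Type*} [MetricSpace Y] [MeasurableSpace Y] [BorelSpace Y]
    (m : Measure Y) (G : Type*) [Group G] [MulAction G Y]
    (hiso : ∀ g : G, Isometry (fun y : Y => g • y))
    (hsurj : ∀ g : G, Function.Surjective (fun y : Y => g • y))
    (hmp : ∀ (g : G) (A : Set Y), MeasurableSet A → m ((fun y : Y => g • y) '' A) = m A)
    (ptil : Y) (δ₀ : ℝ) (hδ₀ : 0 < δ₀)
    (hdisj : Pairwise fun g h : G =>
      Disjoint ((fun y : Y => g • y) '' ball ptil δ₀) ((fun y : Y => h • y) '' ball ptil δ₀))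
    (D : ℝ) (hD : 0 < D)
    (hpos : 0 < m (ball ptil δ₀)) (hfin : m (ball ptil (D + δ₀)) < ⊤) :
    {g : G | dist ptil (g • ptil) ≤ D}.Finite ∧
      (Nat.card {g : G | dist ptil (g • ptil) ≤ D} : ℝ≥0∞) ≤
        m (ball ptil (D + δ₀)) / m (ball ptil δ₀) :=
  stmt_2_general m G hiso hmp ptil δ₀ hdisj D hpos hfin
end

section
/- Let (Y,d) be a metric space carrying a Borel measure m satisfying the Bishop–Gromov inequality with K = 0 and parameter N ∈ (1,∞), with 0 < m(B(y,r)) < ∞ for every ball. Let G be a group acting on Y by measure-preserving surjective isometries, let y₀ ∈ Y, and let ε > 0 satisfy d(y₀, g·y₀) ≥ 2ε for every g ∈ G with g ≠ 1. Suppose G is generated by a finite set 𝔤 = {g₁,…,gₙ} of nontrivial elements and set L := max_i d(y₀, g_i·y₀). Then |U_𝔤(r)| ≤ ((rL+ε)/ε)^N for every r > 0; in particular, G has polynomial growth of degree at most N. -/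
/-!
The displacement `g ↦ d(y₀, g • y₀)` of an isometric action is a group seminorm, bounded by `L`
on the generators, so every `g ∈ U(r)` moves `y₀` by at most `rL`. Separation makes the balls
`B(g • y₀, ε)`, `g ∈ U(r)`, pairwise disjoint; they all have measure `m(B(y₀, ε))` and lie in
`B(y₀, rL + ε)`, so by Bishop–Gromov there are at most `m(B(y₀, rL + ε)) / m(B(y₀, ε)) ≤
((rL + ε)/ε)^N` of them.
-/
open Set Metric MeasureTheory ENNReal

/-- The set of elements of `G` expressible as words `g_{α₁}^{i₁} ⋯ g_{α_k}^{i_k}` with each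
`g_{α_j}` in the generating set `S` and `Σ_j |i_j| ≤ r`. -/
def wordBall {G : Type*} [Group G] (S : Finset G) (r : ℝ) : Set G :=
  {g | ∃ (k : ℕ) (α : Fin k → G) (i : Fin k → ℤ),
    (∀ j, α j ∈ S) ∧ (((∑ j, |i j| : ℤ) : ℝ) ≤ r) ∧
      g = (List.ofFn fun j => α j ^ (i j)).prod}

namespace GroupSeminorm

variable {G : Type*} [Group G] (f : GroupSeminorm G)

theorem apply_pow_le (x : G) (n : ℕ) : f (x ^ n) ≤ n * f x := by
  induction n with
  | zero => simp
  | succ n ih =>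
    calc f (x ^ (n + 1)) ≤ f (x ^ n) + f x := pow_succ x n ▸ map_mul_le_add f _ _
      _ ≤ (n + 1 : ℕ) * f x := by push_cast; linarith

theorem apply_zpow_le (x : G) (n : ℤ) : f (x ^ n) ≤ |(n : ℝ)| * f x := by
  obtain ⟨n, rfl | rfl⟩ := n.eq_nat_or_neg
  · simpa using f.apply_pow_le x n
  · simpa using f.apply_pow_le x n

theorem apply_list_prod_le (l : List G) : f l.prod ≤ (l.map f).sum := by
  induction l with
  | nil => simp
  | cons a l ih =>
    rw [List.prod_cons, List.map_cons, List.sum_cons]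
    exact (map_mul_le_add f a l.prod).trans (by linarith)

theorem apply_le_mul_of_mem_wordBall {S : Finset G} {L r : ℝ} (hL : 0 ≤ L)
    (hS : ∀ s ∈ S, f s ≤ L) {g : G} (hg : g ∈ wordBall S r) : f g ≤ r * L := by
  obtain ⟨k, α, i, hα, hlen, rfl⟩ := hg
  calc f (List.ofFn fun j => α j ^ i j).prod
      ≤ ∑ j, f (α j ^ i j) := by
        refine (f.apply_list_prod_le _).trans_eq ?_
        rw [List.map_ofFn, List.sum_ofFn]
        rfl
    _ ≤ ∑ j, |(i j : ℝ)| * L := by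
        gcongr with j
        exact (f.apply_zpow_le _ _).trans
          (mul_le_mul_of_nonneg_left (hS _ (hα j)) (abs_nonneg _))
    _ = ((∑ j, |i j| : ℤ) : ℝ) * L := by push_cast; rw [Finset.sum_mul]
    _ ≤ r * L := mul_le_mul_of_nonneg_right hlen hL

end GroupSeminorm

section IsometricAction

variable (G : Type*) {Y : Type*} [Group G] [PseudoMetricSpace Y] [MulAction G Y]
  [IsIsometricSMul G Y]

def displacementSeminorm (y : Y) : GroupSeminorm G where
  toFun g := dist y (g • y)
  map_one' := by simp
  mul_le' g h := by
    calc dist y ((g * h) • y) ≤ dist y (g • y) + dist (g • y) ((g * h) • y) := dist_triangle ..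
      _ = dist y (g • y) + dist y (h • y) := by rw [mul_smul, dist_smul]
  inv' g := by rw [← dist_smul g, smul_inv_smul, dist_comm]

variable {G}

theorem dist_smul_smul_eq (g h : G) (y : Y) : dist (g • y) (h • y) = dist y ((g⁻¹ * h) • y) := by
  rw [mul_smul, ← dist_smul g⁻¹, inv_smul_smul]

theorem card_mul_measure_ball_le [MeasurableSpace Y] [OpensMeasurableSpace Y] (m : Measure Y)
    [SMulInvariantMeasure G Y m] {y : Y} {ε ρ : ℝ}
    (hsep : ∀ g : G, g ≠ 1 → 2 * ε ≤ dist y (g • y)) (F : Finset G)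
    (hF : ∀ g ∈ F, dist y (g • y) ≤ ρ) :
    F.card * m (ball y ε) ≤ m (ball y (ρ + ε)) := by
  have hdisj : (F : Set G).PairwiseDisjoint fun g => ball (g • y) ε := by
    intro g _ h _ hgh
    refine ball_disjoint_ball ?_
    rw [dist_smul_smul_eq]
    linarith [hsep _ fun h1 => hgh (inv_mul_eq_one.mp h1)]
  have hsub : (⋃ g ∈ F, ball (g • y) ε) ⊆ ball y (ρ + ε) := by
    simp only [iUnion_subset_iff]
    exact fun g hg => ball_subset_ball' (by rw [dist_comm]; linarith [hF g hg])
  calc (F.card : ℝ≥0∞) * m (ball y ε) = ∑ g ∈ F, m (ball (g • y) ε) := by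
        simp only [← Metric.smul_ball, measure_smul, Finset.sum_const, nsmul_eq_mul]
    _ = m (⋃ g ∈ F, ball (g • y) ε) :=
        (measure_biUnion_finset hdisj fun g _ => measurableSet_ball).symm
    _ ≤ m (ball y (ρ + ε)) := measure_mono hsub

end IsometricAction

theorem smulInvariantMeasure_of_measure_image {G α : Type*} [Group G] [MulAction G α]
    [MeasurableSpace α] {μ : Measure α}
    (h : ∀ (g : G) (A : Set α), MeasurableSet A → μ ((fun x => g • x) '' A) = μ A) :
    SMulInvariantMeasure G α μ :=
  ⟨fun g s hs => by rw [preimage_smul, ← image_smul, h _ _ hs]⟩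

/-- The Bishop–Gromov volume comparison in the flat case `K = 0`. -/
def BishopGromov {Y : Type*} [PseudoMetricSpace Y] [MeasurableSpace Y] (m : Measure Y)
    (N : ℝ) : Prop :=
  ∀ (y : Y) (r R : ℝ), 0 < r → r ≤ R → ENNReal.ofReal ((r / R) ^ N) * m (ball y R) ≤ m (ball y r)

theorem BishopGromov.natCast_le_of_mul_measure_ball_le {Y : Type*} [PseudoMetricSpace Y]
    [MeasurableSpace Y] {m : Measure Y} {N : ℝ} (hBG : BishopGromov m N) {y : Y} {ε R : ℝ}
    (hε : 0 < ε) (hεR : ε ≤ R) (h0 : m (ball y R) ≠ 0) (htop : m (ball y R) ≠ ⊤) {n : ℕ}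
    (hn : n * m (ball y ε) ≤ m (ball y R)) : (n : ℝ) ≤ (R / ε) ^ N := by
  have hR : 0 < R := hε.trans_le hεR
  have hc : (0 : ℝ) < (ε / R) ^ N := Real.rpow_pos_of_pos (div_pos hε hR) N
  have hmul : (n : ℝ≥0∞) * ENNReal.ofReal ((ε / R) ^ N) ≤ 1 := by
    rw [← ENNReal.mul_le_mul_iff_left h0 htop, one_mul, mul_assoc]
    exact (mul_le_mul_right (hBG y ε R hε hεR) _).trans hn
  rw [← ENNReal.le_inv_iff_mul_le, ← ENNReal.ofReal_inv_of_pos hc, ← ENNReal.ofReal_natCast,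
    ENNReal.ofReal_le_ofReal_iff (by positivity), ← Real.inv_rpow (by positivity), inv_div] at hmul
  exact hmul

theorem Set.finite_and_natCard_le_of_forall_finset_card_le_s3 {α : Type*} {s : Set α} {C : ℝ}
    (h : ∀ F : Finset α, ↑F ⊆ s → (F.card : ℝ) ≤ C) : s.Finite ∧ (Nat.card s : ℝ) ≤ C := by
  have hfin : s.Finite := by
    by_contra hinf
    obtain ⟨F, hFs, hFcard⟩ := Set.Infinite.exists_subset_card_eq hinf (⌊C⌋₊ + 1)
    have := h F hFs
    rw [hFcard] at this
    push_cast at this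
    linarith [Nat.lt_floor_add_one C]
  refine ⟨hfin, ?_⟩
  rw [Nat.card_coe_set_eq, Set.ncard_eq_toFinset_card _ hfin]
  exact h _ (by simp)

theorem stmt_3_general {Y : Type*} [MetricSpace Y] [MeasurableSpace Y] [BorelSpace Y]
    (m : Measure Y) (N : ℝ)
    (hBG : ∀ (y : Y) (r R : ℝ), 0 < r → r ≤ R →
      ENNReal.ofReal ((r / R) ^ N) * m (ball y R) ≤ m (ball y r))
    (hposfin : ∀ (y : Y) (r : ℝ), 0 < r → 0 < m (ball y r) ∧ m (ball y r) < ⊤)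
    (G : Type*) [Group G] [MulAction G Y]
    (hiso : ∀ g : G, Isometry (fun y : Y => g • y))
    (hmp : ∀ (g : G) (A : Set Y), MeasurableSet A → m ((fun y : Y => g • y) '' A) = m A)
    (y₀ : Y) (ε : ℝ) (hε : 0 < ε)
    (hsep : ∀ g : G, g ≠ 1 → 2 * ε ≤ dist y₀ (g • y₀))
    (S : Finset G)
    (L : ℝ) (hL : IsGreatest ((fun g : G => dist y₀ (g • y₀)) '' S) L) :
    ∀ r : ℝ, 0 < r →
      (wordBall S r).Finite ∧
        (Nat.card (wordBall S r) : ℝ) ≤ ((r * L + ε) / ε) ^ N := by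
  intro r hr
  have : IsIsometricSMul G Y := ⟨hiso⟩
  have : SMulInvariantMeasure G Y m := smulInvariantMeasure_of_measure_image hmp
  have hL0 : 0 ≤ L := by
    obtain ⟨s, -, rfl⟩ := hL.1
    exact dist_nonneg
  have hεR : ε ≤ r * L + ε := le_add_of_nonneg_left (mul_nonneg hr.le hL0)
  obtain ⟨hpos, hfin⟩ := hposfin y₀ _ (hε.trans_le hεR)
  refine Set.finite_and_natCard_le_of_forall_finset_card_le_s3 fun F hF => ?_
  refine BishopGromov.natCast_le_of_mul_measure_ball_le hBG hε hεR hpos.ne' hfin.ne ?_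
  refine card_mul_measure_ball_le m hsep F fun g hg => ?_
  exact (displacementSeminorm G y₀).apply_le_mul_of_mem_wordBall hL0
    (fun s hs => hL.2 ⟨s, hs, rfl⟩) (hF hg)

/-- Milnor-type growth estimate: in a space satisfying the Bishop–Gromov inequality with
`K = 0` and parameter `N`, if `G` acts by measure-preserving surjective isometries with
displacement at least `2ε` at `y₀` for nontrivial elements, and `G` is generated by the
finite set `S` of nontrivial elements with maximal displacement `L` at `y₀`, then
`|U_S(r)| ≤ ((rL + ε)/ε)^N` for all `r > 0`; in particular `G` has polynomial growth of
degree at most `N`. -/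
theorem stmt_3 {Y : Type*} [MetricSpace Y] [MeasurableSpace Y] [BorelSpace Y]
    (m : Measure Y) (N : ℝ) (hN : 1 < N)
    (hBG : ∀ (y : Y) (r R : ℝ), 0 < r → r ≤ R →
      ENNReal.ofReal ((r / R) ^ N) * m (ball y R) ≤ m (ball y r))
    (hposfin : ∀ (y : Y) (r : ℝ), 0 < r → 0 < m (ball y r) ∧ m (ball y r) < ⊤)
    (G : Type*) [Group G] [MulAction G Y]
    (hiso : ∀ g : G, Isometry (fun y : Y => g • y))
    (hsurj : ∀ g : G, Function.Surjective (fun y : Y => g • y))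
    (hmp : ∀ (g : G) (A : Set Y), MeasurableSet A → m ((fun y : Y => g • y) '' A) = m A)
    (y₀ : Y) (ε : ℝ) (hε : 0 < ε)
    (hsep : ∀ g : G, g ≠ 1 → 2 * ε ≤ dist y₀ (g • y₀))
    (S : Finset G) (hSne : S.Nonempty) (hS1 : (1 : G) ∉ S)
    (hgen : Subgroup.closure (S : Set G) = ⊤)
    (L : ℝ) (hL : IsGreatest ((fun g : G => dist y₀ (g • y₀)) '' S) L) :
    ∀ r : ℝ, 0 < r →
      (wordBall S r).Finite ∧
        (Nat.card (wordBall S r) : ℝ) ≤ ((r * L + ε) / ε) ^ N :=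
  stmt_3_general m N hBG hposfin G hiso hmp y₀ ε hε hsep S L hL
end

section
/- Let (Y,d) be a metric space carrying a Borel measure m satisfying the Bishop–Gromov inequality with K = 0 and parameter N ∈ (1,∞), with 0 < m(B(y,r)) < ∞ for every ball. Let G be a group acting on Y by measure-preserving surjective isometries, and let D ⊆ Y be a Borel set containing a point y₀ such that the translates g·D, g ∈ G, are pairwise disjoint for distinct elements of G and cover Y. If C := liminf_{r→∞} m(B(y₀,r) ∩ D)/r^N > 0, then G is finite and |G| ≤ m(B(y₀,1))/C. -/
open Set Metric MeasureTheory ENNReal Filter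

open scoped Pointwise Topology

/-! For a finite `S ⊆ G`, the translates `g • (B(y₀, r) ∩ D)`, `g ∈ S`, are disjoint, all have
the measure of `B(y₀, r) ∩ D`, and lie in `B(y₀, r + L)` with `L = ∑_{g ∈ S} d(g y₀, y₀)`. By
Bishop–Gromov, `m(B(y₀, r + L)) ≤ (r + L)^N m(B(y₀, 1))`; dividing by `r^N` and taking the
liminf as `r → ∞` gives `|S| C ≤ m(B(y₀, 1))`, which bounds every finite subset of `G`. -/

lemma measure_ball_le_rpow_mul_of_bishopGromov {Y : Type*} [PseudoMetricSpace Y] [MeasurableSpace Y]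
    {m : Measure Y} {N : ℝ}
    (hBG : ∀ (y : Y) (r R : ℝ), 0 < r → r ≤ R →
      ENNReal.ofReal ((r / R) ^ N) * m (ball y R) ≤ m (ball y r))
    (y : Y) {r R : ℝ} (hr : 0 < r) (hrR : r ≤ R) :
    m (ball y R) ≤ ENNReal.ofReal ((R / r) ^ N) * m (ball y r) := by
  have hR : 0 < R := hr.trans_le hrR
  have hinv : ENNReal.ofReal ((R / r) ^ N) * ENNReal.ofReal ((r / R) ^ N) = 1 := by
    rw [← ENNReal.ofReal_mul (by positivity), ← Real.mul_rpow (by positivity) (by positivity),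
      show R / r * (r / R) = 1 by field_simp, Real.one_rpow, ENNReal.ofReal_one]
  calc m (ball y R)
      = ENNReal.ofReal ((R / r) ^ N) * (ENNReal.ofReal ((r / R) ^ N) * m (ball y R)) := by
        rw [← mul_assoc, hinv, one_mul]
    _ ≤ ENNReal.ofReal ((R / r) ^ N) * m (ball y r) := by gcongr; exact hBG y r R hr hrR

lemma Isometry.image_ball_subset_ball_add {Y : Type*} [PseudoMetricSpace Y] {f : Y → Y}
    (hf : Isometry f) (y : Y) (r : ℝ) : f '' ball y r ⊆ ball y (r + dist (f y) y) := by
  rintro _ ⟨x, hx, rfl⟩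
  rw [mem_ball] at hx ⊢
  calc dist (f x) y ≤ dist (f x) (f y) + dist (f y) y := dist_triangle _ _ _
    _ < r + dist (f y) y := by rw [hf.dist_eq]; gcongr

lemma tendsto_ofReal_add_div_rpow_atTop (L N : ℝ) :
    Tendsto (fun r : ℝ => ENNReal.ofReal (((r + L) / r) ^ N)) atTop (𝓝 1) := by
  have hquot : Tendsto (fun r : ℝ => (r + L) / r) atTop (𝓝 1) := by
    have : Tendsto (fun r : ℝ => 1 + L / r) atTop (𝓝 (1 + 0)) :=
      tendsto_const_nhds.add (tendsto_const_nhds.div_atTop tendsto_id)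
    rw [add_zero] at this
    refine this.congr' ?_
    filter_upwards [eventually_ne_atTop 0] with r hr
    field_simp
  have hpow := (Real.continuousAt_rpow_const 1 N (Or.inl one_ne_zero)).tendsto.comp hquot
  rw [Real.one_rpow] at hpow
  simpa [Function.comp_def] using (ENNReal.continuous_ofReal.tendsto 1).comp hpow

lemma finite_and_natCard_le_of_forall_finset_card_le {G : Type*} {B : ℝ≥0∞} (hB : B ≠ ⊤)
    (hcard : ∀ S : Finset G, (S.card : ℝ≥0∞) ≤ B) : Finite G ∧ (Nat.card G : ℝ≥0∞) ≤ B := by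
  have hfin : Finite G := by
    by_contra hinf
    rw [not_finite_iff_infinite] at hinf
    obtain ⟨n, hn⟩ := ENNReal.exists_nat_gt hB
    obtain ⟨S, rfl⟩ := Infinite.exists_subset_card_eq G n
    exact (hcard S).not_gt hn
  have : Fintype G := Fintype.ofFinite G
  refine ⟨hfin, ?_⟩
  simpa [Nat.card_eq_fintype_card] using hcard Finset.univ

section Packing

variable {Y G : Type*} [PseudoMetricSpace Y] [MeasurableSpace Y] [BorelSpace Y] [Group G]
  [MulAction G Y]

lemma measurableSet_smul_of_isometry (hiso : ∀ g : G, Isometry (fun y : Y => g • y)) (g : G)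
    {A : Set Y} (hA : MeasurableSet A) : MeasurableSet (g • A) := by
  rw [← preimage_smul_inv]
  exact (hiso g⁻¹).continuous.measurable hA

lemma card_mul_measure_le_measure_biUnion_smul {m : Measure Y}
    (hiso : ∀ g : G, Isometry (fun y : Y => g • y))
    (hmp : ∀ (g : G) (A : Set Y), MeasurableSet A → m ((fun y : Y => g • y) '' A) = m A)
    {D : Set Y} (hdisj : Pairwise fun g h : G =>
      Disjoint ((fun y : Y => g • y) '' D) ((fun y : Y => h • y) '' D))
    (S : Finset G) {A : Set Y} (hA : MeasurableSet A) (hAD : A ⊆ D) :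
    (S.card : ℝ≥0∞) * m A ≤ m (⋃ g ∈ S, g • A) := by
  have hpd : (S : Set G).PairwiseDisjoint (· • A) := fun g _ h _ hgh =>
    (hdisj hgh).mono (image_mono hAD) (image_mono hAD)
  have hmpA : ∀ g : G, m (g • A) = m A := fun g => hmp g A hA
  rw [measure_biUnion_finset hpd fun g _ => measurableSet_smul_of_isometry hiso g hA]
  simp only [hmpA, Finset.sum_const, nsmul_eq_mul, le_refl]

lemma card_mul_liminf_le_measure_ball_one {m : Measure Y} {N : ℝ}
    (hBG : ∀ (y : Y) (r R : ℝ), 0 < r → r ≤ R →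
      ENNReal.ofReal ((r / R) ^ N) * m (ball y R) ≤ m (ball y r))
    (hiso : ∀ g : G, Isometry (fun y : Y => g • y))
    (hmp : ∀ (g : G) (A : Set Y), MeasurableSet A → m ((fun y : Y => g • y) '' A) = m A)
    {D : Set Y} (hDmeas : MeasurableSet D) (hdisj : Pairwise fun g h : G =>
      Disjoint ((fun y : Y => g • y) '' D) ((fun y : Y => h • y) '' D))
    (y₀ : Y) (S : Finset G) :
    (S.card : ℝ≥0∞) * liminf (fun r : ℝ => m (ball y₀ r ∩ D) / ENNReal.ofReal (r ^ N)) atTop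
      ≤ m (ball y₀ 1) := by
  set L := ∑ g ∈ S, dist (g • y₀) y₀
  have hL : 0 ≤ L := Finset.sum_nonneg fun g _ => dist_nonneg
  have hdist : ∀ g ∈ S, dist (g • y₀) y₀ ≤ L := fun g hg =>
    Finset.single_le_sum (f := fun g => dist (g • y₀) y₀) (fun g _ => dist_nonneg) hg
  have hpack : ∀ r, (S.card : ℝ≥0∞) * m (ball y₀ r ∩ D) ≤ m (ball y₀ (r + L)) := by
    intro r
    refine (card_mul_measure_le_measure_biUnion_smul hiso hmp hdisj S
      (measurableSet_ball.inter hDmeas) inter_subset_right).trans (measure_mono ?_)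
    refine iUnion₂_subset fun g hg => (image_mono inter_subset_left).trans ?_
    exact ((hiso g).image_ball_subset_ball_add y₀ r).trans
      (ball_subset_ball (by gcongr; exact hdist g hg))
  have hstep : ∀ r : ℝ, 1 ≤ r →
      (S.card : ℝ≥0∞) * (m (ball y₀ r ∩ D) / ENNReal.ofReal (r ^ N))
        ≤ m (ball y₀ 1) * ENNReal.ofReal (((r + L) / r) ^ N) := by
    intro r hr
    have hr0 : 0 < r := one_pos.trans_le hr
    calc (S.card : ℝ≥0∞) * (m (ball y₀ r ∩ D) / ENNReal.ofReal (r ^ N))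
        ≤ m (ball y₀ (r + L)) / ENNReal.ofReal (r ^ N) := by
          rw [← mul_div_assoc]; gcongr; exact hpack r
      _ ≤ ENNReal.ofReal ((r + L) ^ N) * m (ball y₀ 1) / ENNReal.ofReal (r ^ N) := by
          gcongr
          simpa using measure_ball_le_rpow_mul_of_bishopGromov hBG y₀ one_pos
            (show (1 : ℝ) ≤ r + L by linarith)
      _ = m (ball y₀ 1) * ENNReal.ofReal (((r + L) / r) ^ N) := by
          rw [mul_comm, mul_div_assoc, ← ENNReal.ofReal_div_of_pos (by positivity),
            Real.div_rpow (by linarith) hr0.le]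
  have hlim : Tendsto (fun r : ℝ => m (ball y₀ 1) * ENNReal.ofReal (((r + L) / r) ^ N)) atTop
      (𝓝 (m (ball y₀ 1))) := by
    simpa using ENNReal.Tendsto.const_mul (tendsto_ofReal_add_div_rpow_atTop L N)
      (Or.inl one_ne_zero)
  rw [← ENNReal.liminf_const_mul_of_ne_top (natCast_ne_top _), ← hlim.liminf_eq]
  exact liminf_le_liminf ((eventually_ge_atTop 1).mono hstep)

end Packing

theorem stmt_4_general {Y : Type*} [MetricSpace Y] [MeasurableSpace Y] [BorelSpace Y]
    (m : Measure Y) (N : ℝ)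
    (hBG : ∀ (y : Y) (r R : ℝ), 0 < r → r ≤ R →
      ENNReal.ofReal ((r / R) ^ N) * m (ball y R) ≤ m (ball y r))
    (hposfin : ∀ (y : Y) (r : ℝ), 0 < r → 0 < m (ball y r) ∧ m (ball y r) < ⊤)
    (G : Type*) [Group G] [MulAction G Y]
    (hiso : ∀ g : G, Isometry (fun y : Y => g • y))
    (hmp : ∀ (g : G) (A : Set Y), MeasurableSet A → m ((fun y : Y => g • y) '' A) = m A)
    (D : Set Y) (hDmeas : MeasurableSet D) (y₀ : Y)
    (hdisj : Pairwise fun g h : G =>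
      Disjoint ((fun y : Y => g • y) '' D) ((fun y : Y => h • y) '' D))
    (C : ℝ≥0∞)
    (hC : C = Filter.liminf
      (fun r : ℝ => m (ball y₀ r ∩ D) / ENNReal.ofReal (r ^ N)) Filter.atTop)
    (hCpos : 0 < C) :
    Finite G ∧ (Nat.card G : ℝ≥0∞) ≤ m (ball y₀ 1) / C := by
  have hfin : m (ball y₀ 1) ≠ ⊤ := (hposfin y₀ 1 one_pos).2.ne
  refine finite_and_natCard_le_of_forall_finset_card_le (div_ne_top hfin hCpos.ne') fun S => ?_
  rw [ENNReal.le_div_iff_mul_le (Or.inl hCpos.ne') (Or.inr hfin), hC]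
  exact card_mul_liminf_le_measure_ball_one hBG hiso hmp hDmeas hdisj y₀ S

/-- Anderson-type theorem: in a space satisfying the Bishop–Gromov inequality with `K = 0`
and parameter `N`, if `G` acts by measure-preserving surjective isometries with a Borel
fundamental domain `D ∋ y₀`, and `C := liminf_{r→∞} m(B(y₀,r) ∩ D)/r^N > 0`, then `G` is
finite with `|G| ≤ m(B(y₀,1))/C`. -/
theorem stmt_4 {Y : Type*} [MetricSpace Y] [MeasurableSpace Y] [BorelSpace Y]
    (m : Measure Y) (N : ℝ) (hN : 1 < N)
    (hBG : ∀ (y : Y) (r R : ℝ), 0 < r → r ≤ R →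
      ENNReal.ofReal ((r / R) ^ N) * m (ball y R) ≤ m (ball y r))
    (hposfin : ∀ (y : Y) (r : ℝ), 0 < r → 0 < m (ball y r) ∧ m (ball y r) < ⊤)
    (G : Type*) [Group G] [MulAction G Y]
    (hiso : ∀ g : G, Isometry (fun y : Y => g • y))
    (hsurj : ∀ g : G, Function.Surjective (fun y : Y => g • y))
    (hmp : ∀ (g : G) (A : Set Y), MeasurableSet A → m ((fun y : Y => g • y) '' A) = m A)
    (D : Set Y) (hDmeas : MeasurableSet D) (y₀ : Y) (hy₀ : y₀ ∈ D)
    (hdisj : Pairwise fun g h : G =>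
      Disjoint ((fun y : Y => g • y) '' D) ((fun y : Y => h • y) '' D))
    (hcover : (⋃ g : G, (fun y : Y => g • y) '' D) = Set.univ)
    (C : ℝ≥0∞)
    (hC : C = Filter.liminf
      (fun r : ℝ => m (ball y₀ r ∩ D) / ENNReal.ofReal (r ^ N)) Filter.atTop)
    (hCpos : 0 < C) :
    Finite G ∧ (Nat.card G : ℝ≥0∞) ≤ m (ball y₀ 1) / C :=
  stmt_4_general m N hBG hposfin G hiso hmp D hDmeas y₀ hdisj C hC hCpos
end

section
/- Let (Y,d) be an unbounded proper geodesic metric space, let G be a group acting on Y by surjective isometries, and suppose there is a bounded subset B ⊆ Y with ⋃_{g∈G} g·B = Y (the action is cocompact). Then Y contains a line, i.e. there exists a map γ : ℝ → Y with d(γ(s),γ(t)) = |s−t| for all s,t ∈ ℝ. -/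
open Set Metric Filter

/-!
Geodesic segments of length `2n` exist for every `n` since `Y` is unbounded; translating by the
group, their midpoints can be placed in the bounded set `B`. In a proper space these segments then
subconverge pointwise (along a free ultrafilter on `ℕ`), and the limit is a line.
-/

section

variable {Y : Type*} [MetricSpace Y]

lemma isometry_domRestrict_Icc_of_segment {γ : ℝ → Y} {L r : ℝ}
    (hγ : ∀ s ∈ Icc 0 L, ∀ t ∈ Icc 0 L, dist (γ s) (γ t) = |s - t|) (hr : 2 * r ≤ L) :
    Isometry ((Icc (-r) r).domRestrict fun t => γ (L / 2 + t)) := by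
  refine Isometry.of_dist_eq fun ⟨s, hs⟩ ⟨t, ht⟩ => ?_
  have hs' : L / 2 + s ∈ Icc 0 L := ⟨by linarith [hs.1], by linarith [hs.2]⟩
  have ht' : L / 2 + t ∈ Icc 0 L := ⟨by linarith [ht.1], by linarith [ht.2]⟩
  rw [domRestrict_apply, domRestrict_apply, hγ _ hs' _ ht', Subtype.dist_eq, Real.dist_eq]
  ring_nf

lemma Ultrafilter.exists_tendsto_of_eventually_mem_isCompact {α X : Type*} [TopologicalSpace X]
    {K : Set X} (hK : IsCompact K) (F : Ultrafilter α) {u : α → X}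
    (hu : ∀ᶠ a in (F : Filter α), u a ∈ K) : ∃ x, Tendsto u F (nhds x) := by
  obtain ⟨x, -, hx⟩ := hK.ultrafilter_le_nhds (F.map u) (by rwa [coe_map, le_principal_iff])
  exact ⟨x, hx⟩

theorem exists_isometry_of_isometry_domRestrict_Icc [ProperSpace Y] {K : Set Y}
    (hK : Bornology.IsBounded K) (f : ℕ → ℝ → Y) (hf0 : ∀ n, f n 0 ∈ K)
    (hf : ∀ n : ℕ, Isometry ((Icc (-(n : ℝ)) n).domRestrict (f n))) :
    ∃ γ : ℝ → Y, Isometry γ := by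
  have hmem (t : ℝ) : ∀ᶠ n : ℕ in hyperfilter ℕ, t ∈ Icc (-(n : ℝ)) n :=
    ((tendsto_natCast_atTop_atTop.eventually_ge_atTop |t|).filter_mono
      Nat.hyperfilter_le_atTop).mono fun _ hn => abs_le.mp hn
  have hdist (s t : ℝ) : ∀ᶠ n in hyperfilter ℕ, dist (f n s) (f n t) = dist s t := by
    filter_upwards [hmem s, hmem t] with n hs ht
    simpa only [domRestrict_apply, Subtype.dist_eq] using (hf n).dist_eq ⟨s, hs⟩ ⟨t, ht⟩
  obtain ⟨R, hR⟩ := hK.subset_closedBall (f 0 0)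
  have hbdd (t : ℝ) : ∀ᶠ n in hyperfilter ℕ, f n t ∈ closedBall (f 0 0) (|t| + R) := by
    filter_upwards [hdist t 0] with n hn
    calc dist (f n t) (f 0 0) ≤ dist (f n t) (f n 0) + dist (f n 0) (f 0 0) := dist_triangle ..
      _ ≤ |t| + R := by
        rw [hn, Real.dist_0_eq_abs]
        exact add_le_add_right (mem_closedBall.mp (hR (hf0 n))) _
  choose γ hγ using fun t =>
    (hyperfilter ℕ).exists_tendsto_of_eventually_mem_isCompact (isCompact_closedBall _ _) (hbdd t)
  exact ⟨γ, Isometry.of_dist_eq fun s t =>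
    tendsto_nhds_unique ((hγ s).dist (hγ t))
      (tendsto_const_nhds.congr' ((hdist s t).mono fun _ => Eq.symm))⟩

end

theorem stmt_6_general {Y : Type*} [MetricSpace Y] [ProperSpace Y]
    (hunb : ¬ Bornology.IsBounded (Set.univ : Set Y))
    (hgeo : ∀ x y : Y, ∃ γ : ℝ → Y, γ 0 = x ∧ γ (dist x y) = y ∧
      ∀ s ∈ Set.Icc 0 (dist x y), ∀ t ∈ Set.Icc 0 (dist x y),
        dist (γ s) (γ t) = |s - t|)
    (G : Type*) [Group G] [MulAction G Y]
    (hiso : ∀ g : G, Isometry (fun y : Y => g • y))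
    (B : Set Y) (hB : Bornology.IsBounded B)
    (hcover : (⋃ g : G, (fun y : Y => g • y) '' B) = Set.univ) :
    ∃ γ : ℝ → Y, ∀ s t : ℝ, dist (γ s) (γ t) = |s - t| := by
  have hfar (r : ℝ) : ∃ x y : Y, r < dist x y := by
    by_contra! h
    exact hunb (isBounded_iff.mpr ⟨r, fun x _ y _ => h x y⟩)
  have htranslate (y : Y) : ∃ g : G, g • y ∈ B := by
    obtain ⟨g, b, hb, rfl⟩ := mem_iUnion.mp (hcover ▸ mem_univ y)
    exact ⟨g⁻¹, by simpa using hb⟩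
  have hsegment (n : ℕ) :
      ∃ f : ℝ → Y, f 0 ∈ B ∧ Isometry ((Icc (-(n : ℝ)) n).domRestrict f) := by
    obtain ⟨x, y, hxy⟩ := hfar (2 * n)
    obtain ⟨γ, -, -, hγ⟩ := hgeo x y
    obtain ⟨g, hg⟩ := htranslate (γ (dist x y / 2 + 0))
    exact ⟨fun t => g • γ (dist x y / 2 + t), hg,
      (hiso g).comp (isometry_domRestrict_Icc_of_segment hγ hxy.le)⟩
  choose f hfB hf using hsegment
  obtain ⟨γ, hγ⟩ := exists_isometry_of_isometry_domRestrict_Icc hB f hfB hf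
  exact ⟨γ, fun s t => by rw [hγ.dist_eq, Real.dist_eq]⟩

/-- An unbounded proper geodesic metric space admitting a cocompact action by surjective
isometries contains a line. -/
theorem stmt_6 {Y : Type*} [MetricSpace Y] [ProperSpace Y]
    (hunb : ¬ Bornology.IsBounded (Set.univ : Set Y))
    (hgeo : ∀ x y : Y, ∃ γ : ℝ → Y, γ 0 = x ∧ γ (dist x y) = y ∧
      ∀ s ∈ Set.Icc 0 (dist x y), ∀ t ∈ Set.Icc 0 (dist x y),
        dist (γ s) (γ t) = |s - t|)
    (G : Type*) [Group G] [MulAction G Y]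
    (hiso : ∀ g : G, Isometry (fun y : Y => g • y))
    (hsurj : ∀ g : G, Function.Surjective (fun y : Y => g • y))
    (B : Set Y) (hB : Bornology.IsBounded B)
    (hcover : (⋃ g : G, (fun y : Y => g • y) '' B) = Set.univ) :
    ∃ γ : ℝ → Y, ∀ s t : ℝ, dist (γ s) (γ t) = |s - t| :=
  stmt_6_general hunb hgeo G hiso B hB hcover
end

section
/- Let X be a compact length space and let p : X̃ → X be a regular covering map which is a local isometry between length spaces, where X̃ is connected, proper and noncompact, and the deck transformations act by isometries of X̃. Then X̃ contains a line, i.e. there exists a map γ : ℝ → X̃ with d_{X̃}(γ(s),γ(t)) = |s−t| for all s,t ∈ ℝ. -/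
/-!
Since `X` is compact and the deck group acts transitively on the fibres of `p`, every point of
`Xt` lies within a fixed distance `C` of the orbit of a base point. As `Xt` is proper and
noncompact it is unbounded, and in a length space a nearly shortest path between two far apart
points yields an almost isometric copy of a long interval `[-n, n]`, with error tending to `0`.
Moving the centre of each copy to within `C` of the base point by a deck isometry keeps the
images of each parameter in a fixed compact ball, so a pointwise limit along an ultrafilter is
an isometric copy of `ℝ`.
-/

open Set Metric

open Filter Topology

theorem exists_forall_dist_eq_of_tendsto {ι T Y : Type*} [MetricSpace Y] {l : Filter ι}
    [l.NeBot] (ρ : ι → T → Y) (D : T → T → ℝ)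
    (hK : ∀ t, ∃ K, IsCompact K ∧ ∀ᶠ i in l, ρ i t ∈ K)
    (hD : ∀ s t, Tendsto (fun i => dist (ρ i s) (ρ i t)) l (𝓝 (D s t))) :
    ∃ γ : T → Y, ∀ s t, dist (γ s) (γ t) = D s t := by
  set U := Ultrafilter.of l
  have hUl : ↑U ≤ l := Ultrafilter.of_le l
  have hlim : ∀ t, ∃ z, Tendsto (fun i => ρ i t) U (𝓝 z) := fun t => by
    obtain ⟨K, hKc, hρK⟩ := hK t
    obtain ⟨z, -, hz⟩ := hKc.ultrafilter_le_nhds' (U.map (ρ · t)) (hUl hρK)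
    exact ⟨z, hz⟩
  choose γ hγ using hlim
  exact ⟨γ, fun s t => tendsto_nhds_unique ((hγ s).dist (hγ t)) ((hD s t).mono_left hUl)⟩

theorem IsCoveringMap.isClosed_range {E X : Type*} [TopologicalSpace E] [TopologicalSpace X]
    {f : E → X} (hf : IsCoveringMap f) : IsClosed (range f) := by
  refine isOpen_compl_iff.mp (isOpen_iff_forall_mem_open.mpr fun x hx => ?_)
  obtain ⟨-, U, hxU, hU, -, H, -⟩ := hf x
  have : IsEmpty (f ⁻¹' {x}) := ⟨fun ⟨w, hw⟩ => hx ⟨w, hw⟩⟩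
  exact ⟨U, fun _ hzU ⟨w, hw⟩ => isEmptyElim (H ⟨w, show f w ∈ U from hw ▸ hzU⟩).2, hU, hxU⟩

theorem eVariationOn.edist_add_edist_add_edist_le {α E : Type*} [LinearOrder α]
    [PseudoEMetricSpace E] (f : α → E) {a u v b : α} (hau : a ≤ u) (huv : u ≤ v) (hvb : v ≤ b) :
    edist (f a) (f u) + edist (f u) (f v) + edist (f v) (f b) ≤ eVariationOn f (Icc a b) := by
  have split (x y z : α) (hxy : x ≤ y) (hyz : y ≤ z) :
      eVariationOn f (Icc x y) + eVariationOn f (Icc y z) = eVariationOn f (Icc x z) := by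
    simpa using eVariationOn.Icc_add_Icc f (s := univ) hxy hyz (mem_univ y)
  rw [← split a v b (hau.trans huv) hvb, ← split a u v hau huv]
  gcongr <;> exact eVariationOn.edist_le f (by simp [*]) (by simp [*])

theorem IsLengthSpace.exists_pathLength_lt {Y : Type*} [MetricSpace Y] (hY : IsLengthSpace Y)
    (x y : Y) {ε : ℝ} (hε : 0 < ε) :
    ∃ g : ℝ → Y, ContinuousOn g (Icc 0 1) ∧ g 0 = x ∧ g 1 = y ∧
      pathLength g < ENNReal.ofReal (dist x y + ε) := by
  have hlt : edist x y < ENNReal.ofReal (dist x y + ε) := by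
    rw [edist_dist]
    exact ENNReal.ofReal_lt_ofReal_iff'.mpr ⟨by linarith, by positivity⟩
  rw [hY x y] at hlt
  obtain ⟨⟨g, hg, hg0, hg1⟩, hglen⟩ := iInf_lt_iff.mp hlt
  exact ⟨g, hg, hg0, hg1, hglen⟩

/-- A nearly shortest path cannot double back by more than its excess length, so its points at
prescribed distances from the start are almost isometric to those distances. -/
theorem IsLengthSpace.exists_approx_geodesic {Y : Type*} [MetricSpace Y] (hY : IsLengthSpace Y)
    (x y : Y) {ε : ℝ} (hε : 0 < ε) :
    ∃ σ : ℝ → Y, ∀ a ∈ Icc 0 (dist x y), ∀ b ∈ Icc 0 (dist x y),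
      |dist (σ a) (σ b) - (|a - b|)| ≤ ε := by
  obtain ⟨g, hg, rfl, rfl, hlen⟩ := hY.exists_pathLength_lt x y hε
  set d := dist (g 0) (g 1)
  have hsum : ∀ u ∈ Icc (0:ℝ) 1, ∀ v ∈ Icc (0:ℝ) 1, u ≤ v →
      dist (g 0) (g u) + dist (g u) (g v) + dist (g v) (g 1) < d + ε := by
    intro u hu v hv huv
    have := (eVariationOn.edist_add_edist_add_edist_le g hu.1 huv hv.2).trans_lt hlen
    simp only [edist_dist] at this
    rwa [← ENNReal.ofReal_add (by positivity) (by positivity),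
      ← ENNReal.ofReal_add (by positivity) (by positivity),
      ENNReal.ofReal_lt_ofReal_iff (by positivity)] at this
  have hivt : ∀ a ∈ Icc 0 d, ∃ u ∈ Icc (0:ℝ) 1, dist (g 0) (g u) = a := fun a ha =>
    intermediate_value_Icc zero_le_one
      ((continuous_const.dist continuous_id).comp_continuousOn hg) (by simpa using ha)
  choose! u hu hua using hivt
  have hle : ∀ a ∈ Icc 0 d, ∀ b ∈ Icc 0 d, u a ≤ u b → dist (g (u a)) (g (u b)) ≤ b - a + ε := by
    intro a ha b hb hab
    have := hsum _ (hu a ha) _ (hu b hb) hab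
    have := dist_triangle (g 0) (g (u b)) (g 1)
    linarith [hua a ha, hua b hb]
  refine ⟨g ∘ u, fun a ha b hb => abs_le.mpr ⟨?_, ?_⟩⟩ <;> simp only [Function.comp_apply]
  · have := abs_dist_sub_le (g (u a)) (g (u b)) (g 0)
    rw [dist_comm, hua a ha, dist_comm, hua b hb] at this
    linarith
  · rcases le_total (u a) (u b) with h | h
    · linarith [hle a ha b hb h, neg_abs_le (a - b)]
    · rw [dist_comm]
      linarith [hle b hb a ha h, le_abs_self (a - b)]

theorem IsLengthSpace.exists_approx_segment {Y : Type*} [MetricSpace Y] (hY : IsLengthSpace Y)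
    {x y : Y} {R : ℝ} (hR : 2 * R ≤ dist x y) {ε : ℝ} (hε : 0 < ε) :
    ∃ σ : ℝ → Y, ∀ s ∈ Icc (-R) R, ∀ t ∈ Icc (-R) R, |dist (σ s) (σ t) - (|s - t|)| ≤ ε := by
  obtain ⟨σ, hσ⟩ := hY.exists_approx_geodesic x y hε
  refine ⟨fun s => σ (R + s), fun s hs t ht => ?_⟩
  have := hσ (R + s) ⟨by linarith [hs.1], by linarith [hs.2]⟩
    (R + t) ⟨by linarith [ht.1], by linarith [ht.2]⟩
  rwa [add_sub_add_left_eq_sub] at this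

theorem exists_line_of_approx_lines {Y : Type*} [MetricSpace Y] [ProperSpace Y]
    (ρ : ℕ → ℝ → Y) (y₀ : Y) (C : ℝ) {ε : ℕ → ℝ} (hε : Tendsto ε atTop (𝓝 0))
    (h0 : ∀ n, dist (ρ n 0) y₀ ≤ C)
    (hρ : ∀ s t, ∀ᶠ n in atTop, |dist (ρ n s) (ρ n t) - (|s - t|)| ≤ ε n) :
    ∃ γ : ℝ → Y, ∀ s t, dist (γ s) (γ t) = |s - t| := by
  refine exists_forall_dist_eq_of_tendsto ρ (fun s t => |s - t|) (l := atTop)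
    (fun t => ⟨closedBall y₀ (|t| + 1 + C), isCompact_closedBall _ _, ?_⟩) (fun s t => ?_)
  · filter_upwards [hρ t 0, hε.eventually (gt_mem_nhds one_pos)] with n hn hεn
    rw [sub_zero] at hn
    rw [mem_closedBall]
    linarith [dist_triangle (ρ n t) (ρ n 0) y₀, h0 n, (abs_le.mp hn).2]
  · rw [tendsto_iff_dist_tendsto_zero]
    exact squeeze_zero' (.of_forall fun n => dist_nonneg) (hρ s t) hε

theorem exists_dist_smul_le_of_isOpenMap {X Y G : Type*} [TopologicalSpace X] [MetricSpace Y]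
    [Group G] [MulAction G Y] {p : Y → X} (hpo : IsOpenMap p) (hpc : IsCompact (range p))
    (hiso : ∀ g : G, Isometry (fun y : Y => g • y))
    (hreg : ∀ y₁ y₂ : Y, p y₁ = p y₂ → ∃ g : G, g • y₁ = y₂) (y₀ : Y) :
    ∃ C : ℝ, ∀ y, ∃ g : G, dist y (g • y₀) ≤ C := by
  let V : ℕ → Set Y := fun n => ⋃ g : G, ball (g • y₀) n
  have hcover : range p ⊆ ⋃ n, p '' V n := by
    rintro _ ⟨y, rfl⟩
    obtain ⟨n, hn⟩ := exists_nat_gt (dist y y₀)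
    exact mem_iUnion.2 ⟨n, y, mem_iUnion.2 ⟨1, by simpa using hn⟩, rfl⟩
  have hmono : Monotone fun n => p '' V n := fun m n hmn =>
    image_mono (iUnion_mono fun _ => ball_subset_ball (by exact_mod_cast hmn))
  obtain ⟨n, hn⟩ := hpc.elim_directed_cover _
    (fun n => hpo _ (isOpen_iUnion fun _ => isOpen_ball)) hcover hmono.directed_le
  refine ⟨n, fun y => ?_⟩
  obtain ⟨y', hy', hpy⟩ := hn ⟨y, rfl⟩
  obtain ⟨h, hh⟩ := mem_iUnion.1 hy'
  obtain ⟨g, rfl⟩ := hreg y y' hpy.symm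
  refine ⟨g⁻¹ * h, ?_⟩
  calc dist y ((g⁻¹ * h) • y₀) = dist (g • y) (h • y₀) := by
        rw [mul_smul, ← (hiso g).dist_eq, smul_inv_smul]
    _ ≤ n := (mem_ball.1 hh).le

theorem stmt_10_general {X Xt : Type*} [MetricSpace X] [MetricSpace Xt]
    [CompactSpace X] [ProperSpace Xt]
    (hXt : IsLengthSpace Xt)
    (hnc : ¬ CompactSpace Xt)
    (p : Xt → X) (hp : IsCoveringMap p)
    (G : Type*) [Group G] [MulAction G Xt]
    (hiso : ∀ g : G, Isometry (fun y : Xt => g • y))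
    (hreg : ∀ y₁ y₂ : Xt, p y₁ = p y₂ → ∃ g : G, g • y₁ = y₂) :
    ∃ γ : ℝ → Xt, ∀ s t : ℝ, dist (γ s) (γ t) = |s - t| := by
  have := not_compactSpace_iff.mp hnc
  obtain ⟨x₀⟩ := (cocompact Xt).nonempty_of_neBot
  obtain ⟨C, hC⟩ :=
    exists_dist_smul_le_of_isOpenMap hp.isOpenMap hp.isClosed_range.isCompact hiso hreg x₀
  have hseg (n : ℕ) : ∃ σ : ℝ → Xt, ∀ s ∈ Icc (-n : ℝ) n, ∀ t ∈ Icc (-n : ℝ) n,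
      |dist (σ s) (σ t) - (|s - t|)| ≤ 1 / (n + 1) := by
    obtain ⟨y, hy⟩ := ((tendsto_dist_left_cocompact_atTop x₀).eventually_ge_atTop (2 * n)).exists
    exact hXt.exists_approx_segment hy Nat.one_div_pos_of_nat
  choose σ hσ using hseg
  choose g hg using fun n => hC (σ n 0)
  refine exists_line_of_approx_lines (fun n t => (g n)⁻¹ • σ n t) x₀ C
    tendsto_one_div_add_atTop_nhds_zero_nat (fun n => ?_) (fun s t => ?_)
  · rw [← (hiso (g n)).dist_eq, smul_inv_smul]
    exact hg n
  · filter_upwards [eventually_ge_atTop ⌈max |s| |t|⌉₊] with n hn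
    have hst : max |s| |t| ≤ n := (Nat.le_ceil _).trans (Nat.cast_le.mpr hn)
    rw [(hiso _).dist_eq]
    exact hσ n s (abs_le.mp ((le_max_left _ _).trans hst))
      t (abs_le.mp ((le_max_right _ _).trans hst))

/-- A connected, proper, noncompact regular covering space (with deck transformations
acting by isometries, the covering map being a local isometry) of a compact length space
contains a line. -/
theorem stmt_10 {X Xt : Type*} [MetricSpace X] [MetricSpace Xt]
    [CompactSpace X] [ConnectedSpace Xt] [ProperSpace Xt]
    (hX : IsLengthSpace X) (hXt : IsLengthSpace Xt)
    (hnc : ¬ CompactSpace Xt)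
    (p : Xt → X) (hp : IsCoveringMap p) (hloc : IsLocalIsometry p)
    (G : Type*) [Group G] [MulAction G Xt]
    (hiso : ∀ g : G, Isometry (fun y : Xt => g • y))
    (hdeck : ∀ (g : G) (y : Xt), p (g • y) = p y)
    (hreg : ∀ y₁ y₂ : Xt, p y₁ = p y₂ → ∃ g : G, g • y₁ = y₂) :
    ∃ γ : ℝ → Xt, ∀ s t : ℝ, dist (γ s) (γ t) = |s - t| :=
  stmt_10_general hXt hnc p hp G hiso hreg
end
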